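/- arXiv:2411.12351 — 7 statements merged into one kernel-verified Lean document; each statement's English description precedes it below -/
import Mathlib

section
/- Let P be a finite set of n points on the real line such that all pairwise distances between distinct pairs of points of P are distinct. Then P admits a multipacking of size at least ⌊n/3⌋; that is, the multipacking number MP(P) satisfies MP(P) ≥ ⌊n/3⌋. -/
open scoped Classical

/-- All pairwise distances between distinct pairs of points of `P` are distinct. -/
def DistinctDistances {α : Type*} [MetricSpace α] (P : Finset α) : Prop :=
  ∀ a ∈ P, ∀ b ∈ P, ∀ c ∈ P, ∀ d ∈ P, a ≠ b → c ≠ d →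
    ¬((a = c ∧ b = d) ∨ (a = d ∧ b = c)) → dist a b ≠ dist c d

/-- `N` is the closed neighborhood `N_s[v]`: `v` together with the `s` points of `P`
nearest to `v`. -/
def IsNbhd {α : Type*} [MetricSpace α] (P : Finset α) (v : α) (s : ℕ) (N : Finset α) : Prop :=
  N ⊆ P ∧ v ∈ N ∧ N.card = s + 1 ∧ ∀ a ∈ N, ∀ b ∈ P, b ∉ N → dist v a < dist v b

/-- `M` is an `r`-multipacking of `P`: `M ⊆ P` and for every `v ∈ P` and every
`1 ≤ s ≤ r`, `|N_s[v] ∩ M| ≤ (s+1)/2`. -/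
def IsMultipackingR {α : Type*} [MetricSpace α] (P : Finset α) (r : ℕ) (M : Finset α) : Prop :=
  M ⊆ P ∧ ∀ v ∈ P, ∀ s : ℕ, 1 ≤ s → s ≤ r → ∀ N : Finset α, IsNbhd P v s N →
    2 * (N ∩ M).card ≤ s + 1

/-- `M` is a multipacking of `P`, i.e. an `(n-1)`-multipacking where `n = |P|`. -/
def IsMultipacking {α : Type*} [MetricSpace α] (P : Finset α) (M : Finset α) : Prop :=
  IsMultipackingR P (P.card - 1) M

/-!
Take every third point of `P` in increasing order. On the line, a point of `P` lying between
`v` and a member of `N_s[v]` is no farther from `v`, so `N_s[v]` consists of `s + 1` consecutive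
points of `P`; these contain at most `⌊s/3⌋ + 1` chosen points, and `2 (⌊s/3⌋ + 1) ≤ s + 1`
for `s ≥ 1`.
-/

open Finset

theorem Nat.card_le_div_add_one_of_subset_Icc {S : Finset ℕ} {a b k : ℕ} (hS : S ⊆ Icc a b)
    (hmod : ∀ x ∈ S, ∀ y ∈ S, x ≡ y [MOD k]) : #S ≤ (b - a) / k + 1 := by
  have hinj : Set.InjOn (fun x => (x - a) / k) S := by
    intro x hx y hy hxy
    have hxa := (mem_Icc.1 (hS hx)).1
    have hya := (mem_Icc.1 (hS hy)).1
    have hrem : (x - a) % k = (y - a) % k := Nat.ModEq.add_right_cancel' a <| by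
      rw [Nat.sub_add_cancel hxa, Nat.sub_add_cancel hya]; exact hmod x hx y hy
    have := Nat.div_add_mod (x - a) k
    have := Nat.div_add_mod (y - a) k
    simp only at hxy
    rw [hxy, hrem] at *
    omega
  calc #S ≤ #(range ((b - a) / k + 1)) := by
        refine card_le_card_of_injOn _ (fun x hx => ?_) hinj
        have hxb := (mem_Icc.1 (hS hx)).2
        simpa [Nat.lt_succ_iff] using Nat.div_le_div_right (Nat.sub_le_sub_right hxb a)
    _ = (b - a) / k + 1 := card_range _

namespace Finset

variable {α : Type*} [LinearOrder α]

def everyNth (P : Finset α) (k : ℕ) : Finset α :=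
  ({i : Fin #P | k ∣ (i : ℕ) + 1} : Finset (Fin #P)).map (P.orderEmbOfFin rfl).toEmbedding

theorem everyNth_subset (P : Finset α) (k : ℕ) : P.everyNth k ⊆ P := by
  intro x hx
  obtain ⟨i, -, rfl⟩ := mem_map.1 hx
  exact P.orderEmbOfFin_mem rfl i

theorem card_everyNth (P : Finset α) (k : ℕ) : #(P.everyNth k) = #P / k := by
  rw [everyNth, card_map, ← Nat.card_multiples, ← card_map Fin.valEmbedding]
  congr 1
  ext e
  simp only [mem_map, mem_filter, mem_univ, true_and, mem_range, Fin.valEmbedding_apply]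
  exact ⟨fun ⟨i, hi, he⟩ => he ▸ ⟨i.2, hi⟩, fun ⟨he, hk⟩ => ⟨⟨e, he⟩, hk, rfl⟩⟩

theorem map_filter_orderEmbOfFin_mem {P N : Finset α} (hNP : N ⊆ P) :
    ({i | P.orderEmbOfFin rfl i ∈ N} : Finset (Fin #P)).map (P.orderEmbOfFin rfl).toEmbedding
      = N := by
  ext x
  refine ⟨fun hx => ?_, fun hx => ?_⟩
  · obtain ⟨i, hi, rfl⟩ := mem_map.1 hx
    simpa using hi
  · have : x ∈ Set.range (P.orderEmbOfFin rfl) := by rw [range_orderEmbOfFin]; exact hNP hx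
    obtain ⟨i, rfl⟩ := this
    exact mem_map_of_mem _ (by simpa using hx)

theorem card_inter_everyNth_le {P N : Finset α} (hNP : N ⊆ P)
    (hN : ∀ a ∈ N, ∀ b ∈ N, ∀ x ∈ P, a ≤ x → x ≤ b → x ∈ N) (k : ℕ) :
    #(N ∩ P.everyNth k) ≤ (#N - 1) / k + 1 := by
  obtain rfl | hNne := N.eq_empty_or_nonempty
  · simp
  set f := P.orderEmbOfFin rfl
  set I : Finset (Fin #P) := {i | f i ∈ N}
  have hNI : N = I.map f.toEmbedding := (map_filter_orderEmbOfFin_mem hNP).symm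
  have hIne : I.Nonempty := by simpa [hNI] using hNne
  set lo := I.min' hIne
  set up := I.max' hIne
  have hIcc : Icc lo up ⊆ I := fun j hj => by
    have hlo : f lo ∈ N := by simpa [I] using I.min'_mem hIne
    have hup : f up ∈ N := by simpa [I] using I.max'_mem hIne
    rw [mem_Icc] at hj
    simpa [I] using
      hN _ hlo _ hup (f j) (P.orderEmbOfFin_mem rfl j) (f.monotone hj.1) (f.monotone hj.2)
  have hloup : (lo : ℕ) ≤ up := I.min'_le _ (I.max'_mem hIne)
  have hcardN : (up : ℕ) + 1 - lo ≤ #N := by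
    rw [hNI, card_map, ← Fin.card_Icc]
    exact card_le_card hIcc
  set J : Finset (Fin #P) := {i ∈ I | k ∣ (i : ℕ) + 1}
  calc #(N ∩ P.everyNth k) = #(J.map Fin.valEmbedding) := by
        rw [card_map, hNI, everyNth, ← map_inter, card_map]
        congr 1
        ext i
        simp [J]
    _ ≤ (up - lo : ℕ) / k + 1 := by
        refine Nat.card_le_div_add_one_of_subset_Icc ?_ ?_
        · intro x hx
          obtain ⟨i, hiJ, rfl⟩ := mem_map.1 hx
          have hiI := (mem_filter.1 hiJ).1
          exact mem_Icc.2 ⟨I.min'_le i hiI, I.le_max' i hiI⟩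
        · intro x hx y hy
          obtain ⟨i, hiJ, rfl⟩ := mem_map.1 hx
          obtain ⟨j, hjJ, rfl⟩ := mem_map.1 hy
          exact Nat.ModEq.add_right_cancel' 1 <|
            (Nat.modEq_zero_iff_dvd.2 (mem_filter.1 hiJ).2).trans
              (Nat.modEq_zero_iff_dvd.2 (mem_filter.1 hjJ).2).symm
    _ ≤ (#N - 1) / k + 1 := by gcongr ?_ / k + 1; omega

end Finset

namespace IsNbhd

theorem mem_of_dist_le {α : Type*} [MetricSpace α] {P N : Finset α} {v : α} {s : ℕ}
    (hN : IsNbhd P v s N) {a b : α} (ha : a ∈ N) (hb : b ∈ P) (hba : dist v b ≤ dist v a) :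
    b ∈ N := by
  by_contra hbN
  exact (hN.2.2.2 a ha b hb hbN).not_ge hba

theorem mem_of_mem_Icc {P N : Finset ℝ} {v : ℝ} {s : ℕ} (hN : IsNbhd P v s N) {a b x : ℝ}
    (ha : a ∈ N) (hb : b ∈ N) (hx : x ∈ P) (hax : a ≤ x) (hxb : x ≤ b) : x ∈ N := by
  rcases le_total x v with hxv | hvx
  · exact hN.mem_of_dist_le ha hx (Real.dist_left_le_of_mem_uIcc (Set.mem_uIcc.2 (.inr ⟨hax, hxv⟩)))
  · exact hN.mem_of_dist_le hb hx (Real.dist_left_le_of_mem_uIcc (Set.mem_uIcc.2 (.inl ⟨hvx, hxb⟩)))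

end IsNbhd

theorem multipacking_lower_bound_general (P : Finset ℝ) :
    ∃ M : Finset ℝ, IsMultipacking P M ∧ P.card / 3 ≤ M.card := by
  refine ⟨P.everyNth 3, ⟨P.everyNth_subset 3, fun v _ s hs _ N hN => ?_⟩, (P.card_everyNth 3).ge⟩
  have hcard := card_inter_everyNth_le hN.1 (fun a ha b hb x hx => hN.mem_of_mem_Icc ha hb hx) 3
  rw [hN.2.2.1] at hcard
  omega

/-- Any finite point set on the real line with pairwise distinct distances admits a
multipacking of size at least `⌊n/3⌋`. -/
theorem multipacking_lower_bound (P : Finset ℝ) (hd : DistinctDistances P) :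
    ∃ M : Finset ℝ, IsMultipacking P M ∧ P.card / 3 ≤ M.card :=
  multipacking_lower_bound_general P
end

section
/- Let P = {p_1, p_2, …, p_n} be a finite set of points on the real line listed in increasing order, with all pairwise distances between distinct pairs of points of P distinct. Then the set M = {p_1, p_4, p_7, …} consisting of every third point starting from p_1 (i.e., the points p_{3k+1} with 3k+1 ≤ n) is a multipacking of P. -/
open scoped Classical

/-! The neighbourhood `N_s[v]` of a point on the line is a block of `s + 1` consecutive points,
since a point between two members of `N_s[v]` is no farther from `v` than one of them. A block of
`s + 1 ≥ 2` consecutive indices contains at most `⌈(s + 1) / 3⌉ ≤ (s + 1) / 2` multiples of `3`. -/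

open Finset

theorem IsNbhd.mem_of_mem_Icc_s2 {P N : Finset ℝ} {v : ℝ} {s : ℕ} (hN : IsNbhd P v s N)
    {a b x : ℝ} (ha : a ∈ N) (hb : b ∈ N) (hx : x ∈ P) (hax : a ≤ x) (hxb : x ≤ b) :
    x ∈ N := by
  by_contra hxN
  have hva := hN.2.2.2 a ha x hx hxN
  have hvb := hN.2.2.2 b hb x hx hxN
  rw [Real.dist_eq, Real.dist_eq] at hva hvb
  rcases abs_cases (v - x) with ⟨hvx, _⟩ | ⟨hvx, _⟩
  · linarith [le_abs_self (v - a)]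
  · linarith [neg_abs_le (v - b)]

theorem IsNbhd.ordConnected_preimage {ι : Type*} [Preorder ι] {p : ι → ℝ} (hp : Monotone p)
    {P N : Finset ℝ} {v : ℝ} {s : ℕ} (hP : ∀ i, p i ∈ P) (hN : IsNbhd P v s N) :
    (p ⁻¹' N).OrdConnected :=
  ⟨fun _ hi _ hj _ hk => hN.mem_of_mem_Icc_s2 hi hj (hP _) (hp hk.1) (hp hk.2)⟩

theorem Finset.eq_Icc_min'_max' {α : Type*} [LinearOrder α] [LocallyFiniteOrder α]
    {I : Finset α} (hI : I.Nonempty) (hconn : (I : Set α).OrdConnected) :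
    I = Icc (I.min' hI) (I.max' hI) :=
  Subset.antisymm (fun _ hx => mem_Icc.2 ⟨I.min'_le _ hx, I.le_max' _ hx⟩)
    fun _ hx => hconn.out (I.min'_mem hI) (I.max'_mem hI) (mem_Icc.1 hx)

theorem Nat.two_mul_card_filter_mod_three_Icc_le {l h : ℕ} (hlh : l < h) :
    2 * #{i ∈ Icc l h | i % 3 = 0} ≤ #(Icc l h) := by
  have hdiv : #{i ∈ Icc l h | i % 3 = 0} ≤ #(Icc ((l + 2) / 3) (h / 3)) := by
    refine card_le_card_of_injOn (· / 3) (fun i hi => ?_) fun i hi j hj hij => ?_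
    · simp only [coe_filter, mem_Icc, Set.mem_ofPred_eq, mem_coe] at hi ⊢
      omega
    · simp only [coe_filter, mem_Icc, Set.mem_ofPred_eq] at hi hj hij
      omega
  rw [Nat.card_Icc] at hdiv ⊢
  omega

theorem Fin.two_mul_card_filter_mod_three_le {n : ℕ} {I : Finset (Fin n)}
    (hconn : (I : Set (Fin n)).OrdConnected) (hI : 2 ≤ #I) :
    2 * #(I.filter fun i : Fin n => (i : ℕ) % 3 = 0) ≤ #I := by
  have hne : I.Nonempty := card_pos.1 (by omega)
  obtain ⟨a, b, rfl⟩ : ∃ a b, I = Icc a b := ⟨_, _, eq_Icc_min'_max' hne hconn⟩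
  have hab : (a : ℕ) < b := by
    by_contra! hba
    have : #(Icc a b) ≤ 1 := by rw [Fin.card_Icc]; omega
    omega
  have hcount : #((Icc a b).filter fun i : Fin n => (i : ℕ) % 3 = 0)
      = #{j ∈ Icc (a : ℕ) b | j % 3 = 0} := by
    rw [← Fin.map_valEmbedding_Icc, filter_map, card_map]
    rfl
  rw [hcount, Fin.card_Icc, ← Nat.card_Icc]
  exact Nat.two_mul_card_filter_mod_three_Icc_le hab

theorem everyThird_isMultipacking_general (n : ℕ) (p : Fin n → ℝ) (hmono : StrictMono p) :
    IsMultipacking (Finset.image p Finset.univ)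
      (Finset.image p (Finset.univ.filter fun i : Fin n => (i : ℕ) % 3 = 0)) := by
  refine ⟨image_subset_image (filter_subset _ _), fun v _ s hs _ N hN => ?_⟩
  obtain ⟨I, -, rfl⟩ := subset_image_iff.1 hN.1
  have hcard : #I = s + 1 := by
    rw [← hN.2.2.1, card_image_of_injective _ hmono.injective]
  have hconn : (I : Set (Fin n)).OrdConnected := by
    rw [← Set.preimage_image_eq (I : Set (Fin n)) hmono.injective, ← coe_image]
    exact hN.ordConnected_preimage hmono.monotone fun i => mem_image_of_mem p (mem_univ i)
  rw [← image_inter _ _ hmono.injective, card_image_of_injective _ hmono.injective,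
    inter_filter, inter_univ, ← hcard]
  exact Fin.two_mul_card_filter_mod_three_le hconn (by omega)

/-- If `p_1 < p_2 < ⋯ < p_n` are points on the line with pairwise distinct distances,
then the set of every third point `{p_1, p_4, p_7, …}` is a multipacking. -/
theorem everyThird_isMultipacking (n : ℕ) (p : Fin n → ℝ) (hmono : StrictMono p)
    (hd : DistinctDistances (Finset.image p Finset.univ)) :
    IsMultipacking (Finset.image p Finset.univ)
      (Finset.image p (Finset.univ.filter fun i : Fin n => (i : ℕ) % 3 = 0)) :=
  everyThird_isMultipacking_general n p hmono
end

section
/- There exists a set P of 5 points in the Euclidean plane ℝ² with all pairwise distances between distinct pairs of points distinct whose multipacking number equals 1; that is, P admits no multipacking of size 2, equivalently, for every two distinct points a, b ∈ P there is a point w ∈ P with {a, b} ⊆ N_2[w]. (Such a set is given by a suitable convex pentagon in which each vertex has its two neighboring vertices on the pentagon as its two nearest neighbors.) -/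
open scoped Classical

/-! The five points are the integer vertices of a convex pentagon in which every vertex has its
two neighbours on the pentagon as its two nearest points, so `N_2[v]` consists of `v` and its two
neighbours. Two distinct vertices are either adjacent, and then both lie in `N_2` of either one,
or they are two steps apart, and then both lie in `N_2` of the vertex between them. Since a
multipacking meets every `N_2[w]` in at most one point, it has at most one point. All distance
comparisons reduce to comparisons of integer squared distances. -/

open Finset

section Multipacking

variable {α : Type*} [MetricSpace α] {P M : Finset α}

theorem isMultipacking_singleton {v : α} (hv : v ∈ P) : IsMultipacking P {v} := by
  refine ⟨singleton_subset_iff.mpr hv, fun w _ s hs _ N _ => ?_⟩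
  have : (N ∩ {v}).card ≤ 1 := (card_le_card inter_subset_right).trans (card_singleton v).le
  omega

theorem IsMultipacking.card_le_one (hM : IsMultipacking P M) (hP : 3 ≤ P.card)
    (hcover : ∀ a ∈ P, ∀ b ∈ P, a ≠ b → ∃ w ∈ P, ∃ N : Finset α,
      IsNbhd P w 2 N ∧ a ∈ N ∧ b ∈ N) :
    M.card ≤ 1 := by
  by_contra! hcard
  obtain ⟨a, ha, b, hb, hab⟩ := one_lt_card.mp hcard
  obtain ⟨w, hw, N, hN, haN, hbN⟩ := hcover a (hM.1 ha) b (hM.1 hb) hab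
  have hsmall : 2 * (N ∩ M).card ≤ 2 + 1 := hM.2 w hw 2 (by norm_num) (by omega) N hN
  have hlarge : 1 < (N ∩ M).card :=
    one_lt_card.mpr ⟨a, mem_inter.mpr ⟨haN, ha⟩, b, mem_inter.mpr ⟨hbN, hb⟩, hab⟩
  omega

end Multipacking

section Image

variable {ι α : Type*} [Fintype ι] [MetricSpace α] [DecidableEq α] {q : ι → α}

theorem distinctDistances_image_univ
    (h : ∀ i j k l, i ≠ j → k ≠ l → ¬((i = k ∧ j = l) ∨ (i = l ∧ j = k)) →
      dist (q i) (q j) ≠ dist (q k) (q l)) :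
    DistinctDistances (univ.image q) := by
  simp only [DistinctDistances, mem_image, mem_univ, true_and, forall_exists_index,
    forall_apply_eq_imp_iff]
  intro i j k l hij hkl hpairs
  refine h i j k l (ne_of_apply_ne q hij) (ne_of_apply_ne q hkl) ?_
  rintro (⟨rfl, rfl⟩ | ⟨rfl, rfl⟩) <;> simp at hpairs

theorem isNbhd_image (hq : Function.Injective q) {S : Finset ι} {k : ι} {s : ℕ}
    (hk : k ∈ S) (hS : S.card = s + 1)
    (hnear : ∀ j ∈ S, ∀ l ∉ S, dist (q k) (q j) < dist (q k) (q l)) :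
    IsNbhd (univ.image q) (q k) s (S.image q) := by
  refine ⟨image_subset_image (subset_univ S), mem_image_of_mem q hk,
    by rw [card_image_of_injective S hq, hS], ?_⟩
  simp only [mem_image, mem_univ, true_and, forall_exists_index, and_imp,
    forall_apply_eq_imp_iff₂, forall_apply_eq_imp_iff]
  exact fun j hj l hl => hnear j hj l fun hlS => hl ⟨l, hlS, rfl⟩

end Image

namespace Pentagon

def vertex : Fin 5 → ℤ × ℤ := ![(19, 2), (4, 19), (-18, 13), (-16, -10), (8, -20)]

def sqDist (i j : Fin 5) : ℤ :=
  ((vertex i).1 - (vertex j).1) ^ 2 + ((vertex i).2 - (vertex j).2) ^ 2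

noncomputable def point (i : Fin 5) : EuclideanSpace ℝ (Fin 2) :=
  !₂[((vertex i).1 : ℝ), ((vertex i).2 : ℝ)]

noncomputable def points : Finset (EuclideanSpace ℝ (Fin 2)) := univ.image point

def nbhd (i : Fin 5) : Finset (Fin 5) := {i - 1, i, i + 1}

theorem dist_point (i j : Fin 5) : dist (point i) (point j) = √(sqDist i j : ℝ) := by
  simp [EuclideanSpace.dist_eq, point, sqDist, Fin.sum_univ_two, Real.dist_eq, sq_abs]

theorem sqDist_nonneg (i j : Fin 5) : 0 ≤ sqDist i j := by
  unfold sqDist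
  positivity

theorem sqDist_pos : ∀ i j : Fin 5, i ≠ j → 0 < sqDist i j := by decide

theorem sqDist_injective : ∀ i j k l : Fin 5, i ≠ j → k ≠ l →
    ¬((i = k ∧ j = l) ∨ (i = l ∧ j = k)) → sqDist i j ≠ sqDist k l := by decide

theorem sqDist_lt_of_mem_nbhd :
    ∀ i, ∀ j ∈ nbhd i, ∀ l ∉ nbhd i, sqDist i j < sqDist i l := by decide

theorem mem_nbhd_self : ∀ i : Fin 5, i ∈ nbhd i := by decide

theorem card_nbhd : ∀ i : Fin 5, (nbhd i).card = 3 := by decide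

theorem exists_mem_nbhd : ∀ i j : Fin 5, ∃ k, i ∈ nbhd k ∧ j ∈ nbhd k := by decide

theorem point_injective : Function.Injective point := by
  intro i j hij
  by_contra hne
  have hdist := dist_point i j
  rw [hij, dist_self, eq_comm, Real.sqrt_eq_zero'] at hdist
  exact (sqDist_pos i j hne).not_ge (by exact_mod_cast hdist)

theorem card_points : points.card = 5 := by
  rw [points, card_image_of_injective _ point_injective, card_univ, Fintype.card_fin]

theorem distinctDistances_points : DistinctDistances points := by
  refine distinctDistances_image_univ fun i j k l hij hkl hpairs => ?_
  rw [dist_point, dist_point, Ne, Real.sqrt_inj (by exact_mod_cast sqDist_nonneg i j)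
    (by exact_mod_cast sqDist_nonneg k l)]
  exact_mod_cast sqDist_injective i j k l hij hkl hpairs

theorem isNbhd_points (k : Fin 5) : IsNbhd points (point k) 2 ((nbhd k).image point) := by
  refine isNbhd_image point_injective (mem_nbhd_self k) (card_nbhd k) fun j hj l hl => ?_
  rw [dist_point, dist_point]
  have hlt := sqDist_lt_of_mem_nbhd k j hj l hl
  exact Real.sqrt_lt_sqrt (by exact_mod_cast sqDist_nonneg k j) (by exact_mod_cast hlt)

theorem exists_nbhd_points (a : EuclideanSpace ℝ (Fin 2)) (ha : a ∈ points)
    (b : EuclideanSpace ℝ (Fin 2)) (hb : b ∈ points) :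
    ∃ w ∈ points, ∃ N, IsNbhd points w 2 N ∧ a ∈ N ∧ b ∈ N := by
  obtain ⟨i, -, rfl⟩ := mem_image.mp ha
  obtain ⟨j, -, rfl⟩ := mem_image.mp hb
  obtain ⟨k, hi, hj⟩ := exists_mem_nbhd i j
  exact ⟨point k, mem_image_of_mem point (mem_univ k), _, isNbhd_points k,
    mem_image_of_mem point hi, mem_image_of_mem point hj⟩

end Pentagon

open Pentagon in
/-- There is a set of `5` points in the Euclidean plane with pairwise distinct distances
whose multipacking number equals `1`: it has a multipacking of size `1`, every
multipacking has size at most `1`, and for every two distinct points `a, b ∈ P` there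
is a point `w ∈ P` with `{a, b} ⊆ N_2[w]`. -/
theorem five_points_multipacking_one :
    ∃ P : Finset (EuclideanSpace ℝ (Fin 2)), P.card = 5 ∧ DistinctDistances P ∧
      (∃ M : Finset (EuclideanSpace ℝ (Fin 2)), IsMultipacking P M ∧ M.card = 1) ∧
      (∀ M : Finset (EuclideanSpace ℝ (Fin 2)), IsMultipacking P M → M.card ≤ 1) ∧
      ∀ a ∈ P, ∀ b ∈ P, a ≠ b → ∃ w ∈ P, ∃ N : Finset (EuclideanSpace ℝ (Fin 2)),
        IsNbhd P w 2 N ∧ a ∈ N ∧ b ∈ N := by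
  have hcover : ∀ a ∈ points, ∀ b ∈ points, a ≠ b → ∃ w ∈ points, ∃ N,
      IsNbhd points w 2 N ∧ a ∈ N ∧ b ∈ N :=
    fun a ha b hb _ => exists_nbhd_points a ha b hb
  refine ⟨points, card_points, distinctDistances_points,
    ⟨{point 0}, isMultipacking_singleton (mem_image_of_mem point (mem_univ 0)), card_singleton _⟩,
    fun M hM => hM.card_le_one (by rw [card_points]; norm_num) hcover, hcover⟩
end

section
/- Let P be a finite set of points in the Euclidean plane ℝ² with all pairwise distances between distinct pairs of points distinct, and let G_P be the simple graph on vertex set P in which, for every v ∈ P with first neighbor u_1 = n_1(v) and second neighbor u_2 = n_2(v), the three edges v u_1, v u_2, and u_1 u_2 are present (and no other edges). Then every vertex of G_P has degree at most 17. -/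
open scoped Classical

/-- `u` is the (unique) nearest neighbor `n_1(v)` of `v` in `P`. -/
def IsNearest {α : Type*} [MetricSpace α] (P : Finset α) (v u : α) : Prop :=
  u ∈ P ∧ u ≠ v ∧ ∀ w ∈ P, w ≠ v → w ≠ u → dist v u < dist v w

/-- `u` is the second nearest neighbor `n_2(v)` of `v` in `P`. -/
def IsSecondNearest {α : Type*} [MetricSpace α] (P : Finset α) (v u : α) : Prop :=
  ∃ u1, IsNearest P v u1 ∧ u ∈ P ∧ u ≠ v ∧ u ≠ u1 ∧
    ∀ w ∈ P, w ≠ v → w ≠ u1 → w ≠ u → dist v u < dist v w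

/-- The nearest-neighbor graph of `P`: distinct points `u, v` are adjacent iff `u` is the
nearest neighbor of `v` in `P` or `v` is the nearest neighbor of `u` in `P`. -/
def NNG {α : Type*} [MetricSpace α] (P : Finset α) : SimpleGraph α where
  Adj u v := u ≠ v ∧ (IsNearest P v u ∨ IsNearest P u v)
  symm := by
    constructor
    rintro u v ⟨h1, h2⟩
    exact ⟨h1.symm, h2.symm⟩
  loopless := by
    constructor
    rintro u ⟨h1, _⟩
    exact h1 rfl

/-- The graph `G_P`: for each `v ∈ P` with first neighbor `u_1` and second neighbor `u_2`,
the edges `v u_1`, `v u_2` and `u_1 u_2` are present; equivalently, distinct `a, b` are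
adjacent iff both lie in `N_2[v]` for some `v ∈ P`. -/
def GP {α : Type*} [MetricSpace α] (P : Finset α) : SimpleGraph α where
  Adj a b := a ≠ b ∧ ∃ v ∈ P, ∃ N : Finset α, IsNbhd P v 2 N ∧ a ∈ N ∧ b ∈ N
  symm := by
    constructor
    rintro a b ⟨h1, v, hv, N, hN, ha, hb⟩
    exact ⟨h1.symm, v, hv, N, hN, hb, ha⟩
  loopless := by
    constructor
    rintro a ⟨h1, _⟩
    exact h1 rfl

/-!
Fix `p ∈ P`. A neighbour `q` of `p` shares some `N_2[v]` with `p`. For `v = p` this gives at most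
two points. Otherwise `v` lies in `S = {v ≠ p | p ∈ N_2[v]}` and `q` is `v` or the third point of
`N_2[v]`. If some `u ∈ S` nearer to `p` than `v` is seen from `p` within `60°` of `v`, the law of
cosines makes `u` nearer to `v` than `p` is, so `N_2[v] = {v, p, u}` and `q ∈ S`; the remaining,
unshadowed `v` contribute one point each.

Seen from `p`, no three points of `S` are pairwise within `60°`, and the point of `S` farthest
from `p` has at most one other point of `S` within `60°`. Covering the directions at `p` by the
closed `120°` sector centred at that point and four `60°` sectors gives `|S| ≤ 10`; unshadowed
points are pairwise more than `60°` apart, and the same covering gives at most `5` of them.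
Hence `deg p ≤ 2 + 10 + 5`.
-/

open EuclideanGeometry Real Finset Module

section MetricSpace

variable {α : Type*} [MetricSpace α] {P N N' : Finset α} {p v : α} {s : ℕ}

theorem DistinctDistances.dist_ne (hd : DistinctDistances P) (hp : p ∈ P) {a b : α}
    (ha : a ∈ P) (hb : b ∈ P) (hap : a ≠ p) (hbp : b ≠ p) (hab : a ≠ b) : dist p a ≠ dist p b :=
  hd p hp a ha p hp b hb hap.symm hbp.symm (by rintro (⟨-, h⟩ | ⟨h, -⟩) <;> simp_all)

theorem IsNbhd.unique (h : IsNbhd P v s N) (h' : IsNbhd P v s N') : N = N' := by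
  have hcard : N.card = N'.card := by rw [h.2.2.1, h'.2.2.1]
  by_contra hne
  obtain ⟨a, haN, haN'⟩ := not_subset.1 fun hsub => hne (eq_of_subset_of_card_le hsub hcard.ge)
  obtain ⟨b, hbN', hbN⟩ :=
    not_subset.1 fun hsub => hne (eq_of_subset_of_card_le hsub hcard.le).symm
  exact (h.2.2.2 a haN b (h'.1 hbN') hbN).asymm (h'.2.2.2 b hbN' a (h.1 haN) haN')

/-- The closed neighbourhood `N_s[v]`, or `∅` if there is none. -/
noncomputable def nbhd (P : Finset α) (v : α) (s : ℕ) : Finset α :=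
  if h : ∃ N, IsNbhd P v s N then h.choose else ∅

theorem IsNbhd.nbhd_eq (h : IsNbhd P v s N) : nbhd P v s = N := by
  have hex : ∃ N, IsNbhd P v s N := ⟨N, h⟩
  rw [nbhd, dif_pos hex]
  exact hex.choose_spec.unique h

theorem card_nbhd_erase_le (P : Finset α) (v : α) (s : ℕ) :
    ((nbhd P v s).erase v).card ≤ s := by
  by_cases hex : ∃ N, IsNbhd P v s N
  · obtain ⟨N, hN⟩ := hex
    rw [hN.nbhd_eq, card_erase_of_mem hN.2.1, hN.2.2.1, Nat.add_sub_cancel]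
  · simp [nbhd, hex]

noncomputable def reverseNbhd (P : Finset α) (p : α) : Finset α :=
  P.filter fun v => v ≠ p ∧ ∃ N, IsNbhd P v 2 N ∧ p ∈ N

theorem mem_reverseNbhd :
    v ∈ reverseNbhd P p ↔ v ∈ P ∧ v ≠ p ∧ ∃ N, IsNbhd P v 2 N ∧ p ∈ N := by
  simp only [reverseNbhd, mem_filter]

theorem isNbhd_nbhd_of_mem_reverseNbhd (hv : v ∈ reverseNbhd P p) :
    IsNbhd P v 2 (nbhd P v 2) ∧ p ∈ nbhd P v 2 := by
  obtain ⟨-, -, N, hN, hpN⟩ := mem_reverseNbhd.1 hv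
  rw [hN.nbhd_eq]
  exact ⟨hN, hpN⟩

theorem card_nbhd_erase_erase_le_one (hv : v ∈ reverseNbhd P p) :
    (((nbhd P v 2).erase p).erase v).card ≤ 1 := by
  have hpN := (isNbhd_nbhd_of_mem_reverseNbhd hv).2
  have := card_nbhd_erase_le P v 2
  have hpN' : p ∈ (nbhd P v 2).erase v := mem_erase.2 ⟨(mem_reverseNbhd.1 hv).2.1.symm, hpN⟩
  rw [erase_right_comm, card_erase_of_mem hpN']
  omega

end MetricSpace

section InnerProductSpace

variable {V : Type*} [NormedAddCommGroup V] [InnerProductSpace ℝ V]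

theorem dist_lt_dist_of_angle_le_pi_div_three {c u w : V} (hu : u ≠ c)
    (hlt : dist c u < dist c w) (hangle : ∠ u c w ≤ π / 3) : dist w u < dist w c := by
  have hcos : 1 / 2 ≤ Real.cos (∠ u c w) := by
    rw [← cos_pi_div_three]
    exact cos_le_cos_of_nonneg_of_le_pi (angle_nonneg u c w) (by linarith [pi_pos]) hangle
  have hlaw := dist_sq_eq_dist_sq_add_dist_sq_sub_two_mul_dist_mul_dist_mul_cos_angle u c w
  have hpos : 0 < dist u c := dist_pos.2 hu
  rw [dist_comm c u, dist_comm c w] at hlt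
  rw [dist_comm w u]
  have hsq : dist u w * dist u w < dist w c * dist w c := by
    nlinarith [mul_le_mul_of_nonneg_left hcos (by positivity : 0 ≤ 2 * dist u c * dist w c),
      mul_pos hpos (sub_pos.2 hlt)]
  exact lt_of_mul_self_lt_mul_self₀ dist_nonneg hsq

variable {P : Finset V} {p u w : V}

theorem nbhd_eq_of_angle_le (hw : w ∈ reverseNbhd P p) (hu : u ∈ P) (hup : u ≠ p)
    (hlt : dist p u < dist p w) (hangle : ∠ u p w ≤ π / 3) : nbhd P w 2 = {w, p, u} := by
  obtain ⟨⟨-, hwN, hcard, hnear⟩, hpN⟩ := isNbhd_nbhd_of_mem_reverseNbhd hw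
  have hcloser := dist_lt_dist_of_angle_le_pi_div_three hup hlt hangle
  have huN : u ∈ nbhd P w 2 := by
    by_contra huN
    exact (hnear p hpN u hu huN).asymm hcloser
  have hwu : w ≠ u := by rintro rfl; exact hlt.false
  have hwp : w ≠ p := (mem_reverseNbhd.1 hw).2.1
  refine (eq_of_subset_of_card_le ?_ ?_).symm
  · simp [insert_subset_iff, hwN, hpN, huN]
  · rw [hcard, card_eq_three.2 ⟨w, p, u, hwp, hwu, hup.symm, rfl⟩]

theorem eq_of_angle_le_of_angle_le (hw : w ∈ reverseNbhd P p) {u₁ u₂ : V} (hu₁ : u₁ ∈ P)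
    (hu₂ : u₂ ∈ P) (hu₁p : u₁ ≠ p) (hu₂p : u₂ ≠ p) (hlt₁ : dist p u₁ < dist p w)
    (hlt₂ : dist p u₂ < dist p w) (hangle₁ : ∠ u₁ p w ≤ π / 3) (hangle₂ : ∠ u₂ p w ≤ π / 3) :
    u₁ = u₂ := by
  have h := (nbhd_eq_of_angle_le hw hu₁ hu₁p hlt₁ hangle₁).symm.trans
    (nbhd_eq_of_angle_le hw hu₂ hu₂p hlt₂ hangle₂)
  have hmem : u₁ ∈ ({w, p, u₂} : Finset V) := h ▸ by simp
  simp only [mem_insert, mem_singleton] at hmem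
  rcases hmem with rfl | rfl | rfl
  · exact absurd hlt₁ (lt_irrefl _)
  · exact absurd rfl hu₁p
  · rfl

theorem card_le_two_of_angle_le (hd : DistinctDistances P) (hp : p ∈ P)
    (hw : w ∈ reverseNbhd P p) {Y : Finset V} (hY : Y ⊆ reverseNbhd P p)
    (hfar : ∀ y ∈ Y, dist p y ≤ dist p w) (hangle : ∀ y ∈ Y, ∠ y p w ≤ π / 3) :
    Y.card ≤ 2 := by
  have hw' := mem_reverseNbhd.1 hw
  have hY' : ∀ y ∈ Y.erase w, y ∈ P ∧ y ≠ p ∧ dist p y < dist p w ∧ ∠ y p w ≤ π / 3 := by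
    intro y hy
    obtain ⟨hyw, hyY⟩ := mem_erase.1 hy
    obtain ⟨hyP, hyp, -⟩ := mem_reverseNbhd.1 (hY hyY)
    exact ⟨hyP, hyp, (hfar y hyY).lt_of_ne (hd.dist_ne hp hyP hw'.1 hyp hw'.2.1 hyw),
      hangle y hyY⟩
  have hone : (Y.erase w).card ≤ 1 := card_le_one.2 fun a ha b hb => by
    obtain ⟨haP, hap, hlta, hanglea⟩ := hY' a ha
    obtain ⟨hbP, hbp, hltb, hangleb⟩ := hY' b hb
    exact eq_of_angle_le_of_angle_le hw haP hbP hap hbp hlta hltb hanglea hangleb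
  have := pred_card_le_card_erase (s := Y) (a := w)
  omega

noncomputable def unshadowed (P : Finset V) (p : V) : Finset V :=
  (reverseNbhd P p).filter fun w =>
    ∀ u ∈ reverseNbhd P p, dist p u < dist p w → π / 3 < ∠ u p w

theorem eq_of_mem_unshadowed (hd : DistinctDistances P) (hp : p ∈ P)
    (hu : u ∈ unshadowed P p) (hw : w ∈ unshadowed P p) (hangle : ∠ u p w ≤ π / 3) : u = w := by
  obtain ⟨huS, hushadow⟩ := mem_filter.1 hu
  obtain ⟨hwS, hwshadow⟩ := mem_filter.1 hw
  obtain ⟨huP, hup, -⟩ := mem_reverseNbhd.1 huS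
  obtain ⟨hwP, hwp, -⟩ := mem_reverseNbhd.1 hwS
  by_contra hne
  rcases (hd.dist_ne hp huP hwP hup hwp hne).lt_or_gt with h | h
  · exact (hwshadow u huS h).not_ge hangle
  · exact (hushadow w hwS h).not_ge (angle_comm w p u ▸ hangle)

theorem setOf_adj_subset (P : Finset V) (p : V) :
    {q | (GP P).Adj p q} ⊆ ↑((nbhd P p 2).erase p ∪ reverseNbhd P p ∪
      (unshadowed P p).biUnion fun w => ((nbhd P w 2).erase p).erase w) := by
  rintro q ⟨hpq, v, hv, N, hN, hpN, hqN⟩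
  rw [← hN.nbhd_eq] at hpN hqN
  simp only [coe_union, coe_biUnion, Set.mem_union, mem_coe]
  by_cases hvp : v = p
  · subst hvp
    exact .inl (.inl (mem_erase.2 ⟨Ne.symm hpq, hqN⟩))
  have hvS : v ∈ reverseNbhd P p := mem_reverseNbhd.2 ⟨hv, hvp, N, hN, hN.nbhd_eq ▸ hpN⟩
  by_cases hqv : q = v
  · exact .inl (.inr (hqv ▸ hvS))
  by_cases hvR : v ∈ unshadowed P p
  · refine .inr (Set.mem_iUnion₂.2 ⟨v, hvR, ?_⟩)
    exact mem_erase.2 ⟨hqv, mem_erase.2 ⟨Ne.symm hpq, hqN⟩⟩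
  obtain ⟨u, huS, hlt, hangle⟩ :
      ∃ u ∈ reverseNbhd P p, dist p u < dist p v ∧ ∠ u p v ≤ π / 3 := by
    simpa [unshadowed, hvS] using hvR
  obtain ⟨huP, hup, -⟩ := mem_reverseNbhd.1 huS
  rw [nbhd_eq_of_angle_le hvS huP hup hlt hangle] at hqN
  simp only [mem_insert, mem_singleton] at hqN
  rcases hqN with rfl | rfl | rfl
  · exact absurd rfl hqv
  · exact absurd rfl hpq
  · exact .inl (.inr huS)

end InnerProductSpace

section Sectors

variable {V : Type*} [NormedAddCommGroup V] [InnerProductSpace ℝ V] [Fact (finrank ℝ V = 2)]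
  [Module.Oriented ℝ V (Fin 2)]

theorem angle_le_of_oangle_eq_coe {c m x y : V} (hm : m ≠ c) (hx : x ≠ c) (hy : y ≠ c)
    {a b : ℝ} (ha : ∡ m c x = a) (hb : ∡ m c y = b) (hab : |b - a| ≤ π / 3) :
    ∠ x c y ≤ π / 3 := by
  have hxy : ∡ x c y = ((b - a : ℝ) : Real.Angle) := by
    rw [Real.Angle.coe_sub, ← ha, ← hb, ← oangle_add hx hm hy, oangle_rev]
    abel
  have hpi := pi_pos
  have hba : -π < b - a ∧ b - a ≤ π := by
    constructor <;> linarith [neg_abs_le (b - a), le_abs_self (b - a)]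
  rwa [angle_eq_abs_oangle_toReal hx hy, hxy, Real.Angle.toReal_coe_eq_self_iff.2 hba]

noncomputable def sectorCoord (c m x : V) : ℝ :=
  if π / 3 < (∡ m c x).toReal then (∡ m c x).toReal - 2 * π else (∡ m c x).toReal

theorem oangle_eq_sectorCoord (c m x : V) : ∡ m c x = sectorCoord c m x := by
  unfold sectorCoord
  split_ifs
  · rw [Real.Angle.coe_sub, Real.Angle.coe_two_pi, sub_zero, Real.Angle.coe_toReal]
  · rw [Real.Angle.coe_toReal]

theorem sectorCoord_mem_Ioc (c m x : V) :
    sectorCoord c m x ∈ Set.Ioc (-(5 * π / 3)) (π / 3) := by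
  have h1 := Real.Angle.neg_pi_lt_toReal (∡ m c x)
  have h2 := Real.Angle.toReal_le_pi (∡ m c x)
  unfold sectorCoord
  split_ifs with h <;> constructor <;> linarith

/-- The sectors `1, …, 4` are the half-open arcs `[-(k+1)π/3, -kπ/3)` measured from `m`;
sector `0` is the closed arc of width `2π/3` centred at `m`. -/
noncomputable def sectorIndex (c m x : V) : ℕ :=
  (-⌊sectorCoord c m x / (π / 3)⌋ - 1).toNat

theorem sectorIndex_lt_five (c m x : V) : sectorIndex c m x < 5 := by
  have h := (sectorCoord_mem_Ioc c m x).1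
  have : -5 < sectorCoord c m x / (π / 3) := by
    rw [lt_div_iff₀ (by positivity)]; linarith
  have : -5 ≤ ⌊sectorCoord c m x / (π / 3)⌋ := Int.le_floor.2 (by exact_mod_cast this.le)
  unfold sectorIndex; omega

theorem angle_le_of_sectorIndex_eq_zero {c m x : V} (hm : m ≠ c) (hx : x ≠ c)
    (h : sectorIndex c m x = 0) : ∠ x c m ≤ π / 3 := by
  have hpi := pi_pos
  have hlo : -1 ≤ ⌊sectorCoord c m x / (π / 3)⌋ := by unfold sectorIndex at h; omega
  have hlo' : -(π / 3) ≤ sectorCoord c m x := by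
    have := (Int.le_floor.1 hlo : ((-1 : ℤ) : ℝ) ≤ _)
    rw [Int.cast_neg, Int.cast_one, le_div_iff₀ (by positivity)] at this
    linarith
  have hhi := (sectorCoord_mem_Ioc c m x).2
  refine angle_le_of_oangle_eq_coe (b := 0) hm hx hm (oangle_eq_sectorCoord c m x) ?_ ?_
  · rw [oangle_self_left_right, Real.Angle.coe_zero]
  · rw [zero_sub, abs_neg, abs_le]
    exact ⟨hlo', hhi⟩

theorem angle_le_of_sectorIndex_eq {c m x y : V} (hm : m ≠ c) (hx : x ≠ c) (hy : y ≠ c)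
    (h : sectorIndex c m x = sectorIndex c m y) (h0 : sectorIndex c m x ≠ 0) :
    ∠ x c y ≤ π / 3 := by
  have hpi := pi_pos
  have hfloor : ⌊sectorCoord c m x / (π / 3)⌋ = ⌊sectorCoord c m y / (π / 3)⌋ := by
    unfold sectorIndex at h h0; omega
  have hlt := Int.abs_sub_lt_one_of_floor_eq_floor hfloor.symm
  rw [← sub_div, abs_div, abs_of_pos (by positivity : 0 < π / 3),
    div_lt_one (by positivity)] at hlt
  exact angle_le_of_oangle_eq_coe hm hx hy (oangle_eq_sectorCoord c m x)
    (oangle_eq_sectorCoord c m y) hlt.le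

end Sectors

section Plane

variable {V : Type*} [NormedAddCommGroup V] [InnerProductSpace ℝ V] [Fact (finrank ℝ V = 2)]

/-- Sector `0` around `m` is covered by `hnear`, each of the four other sectors by `hpair`. -/
theorem card_le_five_mul_of_angle_le {c m : V} (hm : m ≠ c) {X : Finset V} (hX : c ∉ X)
    {k : ℕ} (hpair : ∀ Y ⊆ X, (∀ x ∈ Y, ∀ y ∈ Y, ∠ x c y ≤ π / 3) → Y.card ≤ k)
    (hnear : (X.filter fun x => ∠ x c m ≤ π / 3).card ≤ k) : X.card ≤ 5 * k := by
  have := Module.finite_of_finrank_eq_succ (Fact.out : finrank ℝ V = 2)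
  let _ : Module.Oriented ℝ V (Fin 2) := ⟨(finBasisOfFinrankEq ℝ V Fact.out).orientation⟩
  have hne : ∀ x ∈ X, x ≠ c := fun x hx h => hX (h ▸ hx)
  calc X.card ≤ k * (range 5).card :=
        card_le_mul_card_image_of_maps_to (f := sectorIndex c m)
          (fun x _ => mem_range.2 (sectorIndex_lt_five c m x)) k fun i _ => ?_
    _ = 5 * k := by rw [card_range, mul_comm]
  rcases eq_or_ne i 0 with rfl | hi
  · refine le_trans (card_le_card fun x hx => ?_) hnear
    rw [mem_filter] at hx ⊢
    exact ⟨hx.1, angle_le_of_sectorIndex_eq_zero hm (hne x hx.1) hx.2⟩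
  · refine hpair _ (filter_subset _ _) fun x hx y hy => ?_
    rw [mem_filter] at hx hy
    exact angle_le_of_sectorIndex_eq hm (hne x hx.1) (hne y hy.1) (hx.2.trans hy.2.symm)
      (hx.2 ▸ hi)

variable {P : Finset V} {p : V}

theorem card_reverseNbhd_le_ten (hd : DistinctDistances P) (hp : p ∈ P) :
    (reverseNbhd P p).card ≤ 10 := by
  rcases (reverseNbhd P p).eq_empty_or_nonempty with hS | hS
  · simp [hS]
  obtain ⟨m, hm, hfar⟩ := exists_max_image _ (dist p) hS
  have hpS : p ∉ reverseNbhd P p := fun h => (mem_reverseNbhd.1 h).2.1 rfl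
  refine card_le_five_mul_of_angle_le (k := 2) (mem_reverseNbhd.1 hm).2.1 hpS
    (fun Y hY hpair => ?_) ?_
  · rcases Y.eq_empty_or_nonempty with rfl | hY₀
    · simp
    obtain ⟨w, hw, hwfar⟩ := exists_max_image _ (dist p) hY₀
    exact card_le_two_of_angle_le hd hp (hY hw) hY hwfar fun y hy => hpair y hy w hw
  · exact card_le_two_of_angle_le hd hp hm (filter_subset _ _)
      (fun y hy => hfar y (mem_filter.1 hy).1) fun y hy => (mem_filter.1 hy).2

theorem card_unshadowed_le_five (hd : DistinctDistances P) (hp : p ∈ P) :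
    (unshadowed P p).card ≤ 5 := by
  rcases (unshadowed P p).eq_empty_or_nonempty with hR | ⟨m, hm⟩
  · simp [hR]
  have hpR : p ∉ unshadowed P p := fun h => (mem_reverseNbhd.1 (mem_filter.1 h).1).2.1 rfl
  refine (card_le_five_mul_of_angle_le (mem_reverseNbhd.1 (mem_filter.1 hm).1).2.1 hpR
    (fun Y hY hpair => card_le_one.2 fun a ha b hb =>
      eq_of_mem_unshadowed hd hp (hY ha) (hY hb) (hpair a ha b hb))
    (card_le_one.2 fun a ha b hb => ?_)).trans_eq (mul_one 5)
  rw [mem_filter] at ha hb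
  exact (eq_of_mem_unshadowed hd hp ha.1 hm ha.2).trans
    (eq_of_mem_unshadowed hd hp hb.1 hm hb.2).symm

theorem ncard_setOf_adj_le_seventeen (hd : DistinctDistances P) (hp : p ∈ P) :
    {q | (GP P).Adj p q}.ncard ≤ 17 :=
  calc _ ≤ _ := (Set.ncard_le_ncard (setOf_adj_subset P p)).trans_eq (Set.ncard_coe_finset _)
    _ ≤ ((nbhd P p 2).erase p).card + (reverseNbhd P p).card + (unshadowed P p).card * 1 :=
      (card_union_le _ _).trans (add_le_add (card_union_le _ _) (card_biUnion_le_card_mul _ _ _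
        fun w hw => card_nbhd_erase_erase_le_one (mem_filter.1 hw).1))
    _ ≤ 2 + 10 + 5 * 1 := by
      gcongr
      exacts [card_nbhd_erase_le P p 2, card_reverseNbhd_le_ten hd hp,
        card_unshadowed_le_five hd hp]

end Plane

/-- Every vertex of the graph `G_P` of a planar point set with pairwise distinct
distances has degree at most `17`. -/
theorem GP_degree_le_17 (P : Finset (EuclideanSpace ℝ (Fin 2)))
    (hd : DistinctDistances P) :
    ∀ p ∈ P, ({q | (GP P).Adj p q} : Set (EuclideanSpace ℝ (Fin 2))).ncard ≤ 17 :=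
  have : Fact (finrank ℝ (EuclideanSpace ℝ (Fin 2)) = 2) := ⟨finrank_euclideanSpace_fin⟩
  fun _ hp => ncard_setOf_adj_le_seventeen hd hp
end

section
/- Let P be a finite set of points in the Euclidean plane ℝ² with all pairwise distances between distinct pairs of points distinct, and let p ∈ P. Define S_1 = {v ∈ P : n_1(v) = p or n_2(v) = p} and S_2 = {n_1(p), n_2(p)} (assuming |P| ≥ 3 so these exist). Then |S_1 ∪ S_2| ≤ 12. -/
open scoped Classical

/- Split the plane around `p` into six sectors of angle `π / 3`. Within a sector, the point `v`
of `S_1 ∪ S_2` farthest from `p` is nearer to every other such point `x` than `p` is (law of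
cosines), while `x` is nearer to `p` than `v` is. But `p` is one of the two nearest neighbours of
`v`, or `v` one of the two nearest neighbours of `p`, so there is at most one such `x`: each sector
holds at most two points. -/

open EuclideanGeometry Real

def closerPoints {α : Type*} [MetricSpace α] (P : Finset α) (v u : α) : Set α :=
  {x | x ∈ P ∧ x ≠ v ∧ dist v x < dist v u}

section NearestNeighbors

variable {α : Type*} [MetricSpace α] {P : Finset α} {v u : α}

theorem IsSecondNearest.mem (h : IsSecondNearest P v u) : u ∈ P :=
  h.choose_spec.2.1

theorem IsSecondNearest.ne (h : IsSecondNearest P v u) : u ≠ v :=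
  h.choose_spec.2.2.1

theorem IsNearest.closerPoints_eq_empty (h : IsNearest P v u) : closerPoints P v u = ∅ := by
  refine Set.eq_empty_of_forall_notMem fun x ⟨hxP, hxv, hlt⟩ => ?_
  rcases eq_or_ne x u with rfl | hxu
  · exact lt_irrefl _ hlt
  · exact lt_asymm hlt (h.2.2 x hxP hxv hxu)

theorem IsSecondNearest.closerPoints_subsingleton (h : IsSecondNearest P v u) :
    (closerPoints P v u).Subsingleton := by
  obtain ⟨u₁, -, -, -, -, hmin⟩ := h
  suffices ∀ x ∈ closerPoints P v u, x = u₁ from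
    fun x hx y hy => (this x hx).trans (this y hy).symm
  rintro x ⟨hxP, hxv, hlt⟩
  by_contra hxu₁
  rcases eq_or_ne x u with rfl | hxu
  · exact lt_irrefl _ hlt
  · exact lt_asymm hlt (hmin x hxP hxv hxu₁ hxu)

theorem closerPoints_subsingleton (h : IsNearest P v u ∨ IsSecondNearest P v u) :
    (closerPoints P v u).Subsingleton := by
  rcases h with h | h
  · exact h.closerPoints_eq_empty ▸ Set.subsingleton_empty
  · exact h.closerPoints_subsingleton

theorem DistinctDistances.injOn_dist (hd : DistinctDistances P) {p : α} (hp : p ∈ P) :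
    Set.InjOn (dist p) (↑P \ {p}) := by
  rintro x ⟨hxP, hxp⟩ y ⟨hyP, hyp⟩ hxy
  by_contra hne
  refine hd p hp x hxP p hp y hyP (Ne.symm hxp) (Ne.symm hyp) ?_ hxy
  rintro (⟨-, rfl⟩ | ⟨rfl, -⟩)
  exacts [hne rfl, hyp rfl]

end NearestNeighbors

section Euclidean

variable {V Pt : Type*} [NormedAddCommGroup V] [InnerProductSpace ℝ V] [MetricSpace Pt]
  [NormedAddTorsor V Pt]

theorem dist_lt_dist_of_angle_le_pi_div_three_s11 {v p x : Pt} (hx : x ≠ p)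
    (hangle : ∠ v p x ≤ π / 3) (hlt : dist p x < dist p v) : dist v x < dist v p := by
  have hcos : 1 / 2 ≤ cos (∠ v p x) := by
    rw [← cos_pi_div_three]
    exact cos_le_cos_of_nonneg_of_le_pi (angle_nonneg _ _ _) (by linarith [pi_pos]) hangle
  have hlaw := law_cos v p x
  rw [dist_comm x p, dist_comm v p] at hlaw
  rw [dist_comm v p]
  have hx₀ : 0 < dist p x := dist_pos.mpr hx.symm
  have hsq : dist v x * dist v x < dist p v * dist p v := by
    nlinarith [mul_le_mul_of_nonneg_left hcos (by positivity : 0 ≤ dist p v * dist p x)]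
  exact (mul_self_lt_mul_self_iff dist_nonneg dist_nonneg).mpr hsq

theorem card_le_two_of_angle_le_pi_div_three {P T : Finset Pt} {p : Pt} (hTP : T ⊆ P)
    (hpT : p ∉ T) (hinj : Set.InjOn (dist p) T)
    (hangle : ∀ x ∈ T, ∀ y ∈ T, ∠ x p y ≤ π / 3)
    (hcloser : ∀ v ∈ T,
      (closerPoints P v p).Subsingleton ∨ (closerPoints P p v).Subsingleton) :
    T.card ≤ 2 := by
  rcases T.eq_empty_or_nonempty with rfl | hne
  · simp
  obtain ⟨v, hvT, hmax⟩ := T.exists_max_image (dist p) hne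
  have hmem : ∀ x ∈ T.erase v, x ∈ closerPoints P v p ∧ x ∈ closerPoints P p v := by
    intro x hx
    obtain ⟨hxv, hxT⟩ := Finset.mem_erase.mp hx
    have hxp : x ≠ p := ne_of_mem_of_not_mem hxT hpT
    have hxP := hTP hxT
    have hfar : dist p x < dist p v :=
      (hmax x hxT).lt_of_ne fun h => hxv (hinj hxT hvT h)
    exact ⟨⟨hxP, hxv, dist_lt_dist_of_angle_le_pi_div_three_s11 hxp (hangle v hvT x hxT) hfar⟩,
      ⟨hxP, hxp, hfar⟩⟩
  have hrest : (T.erase v).card ≤ 1 := by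
    refine Finset.card_le_one.mpr fun x hx y hy => ?_
    rcases hcloser v hvT with h | h
    exacts [h (hmem x hx).1 (hmem y hy).1, h (hmem x hx).2 (hmem y hy).2]
  rw [← Finset.card_erase_add_one hvT]
  omega

end Euclidean

namespace Complex

/-- `sector z = k` iff `arg z ∈ ((k - 1) π / 3, k π / 3]`; as `arg z ∈ (-π, π]`, there are
six sectors. -/
noncomputable def sector (z : ℂ) : ℤ := ⌈z.arg / (π / 3)⌉

theorem sector_mem_Icc (z : ℂ) : sector z ∈ Finset.Icc (-2 : ℤ) 3 := by
  have h3 : (0 : ℝ) < π / 3 := by positivity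
  have hlo : -3 < z.arg / (π / 3) := by
    rw [lt_div_iff₀ h3]; linarith [neg_pi_lt_arg z]
  have hhi : z.arg / (π / 3) ≤ 3 := by
    rw [div_le_iff₀ h3]; linarith [arg_le_pi z]
  rw [Finset.mem_Icc, sector]
  constructor
  · have : ((-3 : ℤ) : ℝ) < z.arg / (π / 3) := by exact_mod_cast hlo
    have := Int.lt_ceil.mpr this
    omega
  · exact Int.ceil_le.mpr (by exact_mod_cast hhi)

theorem abs_arg_sub_arg_lt_of_sector_eq {x y : ℂ} (h : sector x = sector y) :
    |x.arg - y.arg| < π / 3 := by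
  have h3 : (0 : ℝ) < π / 3 := by positivity
  obtain ⟨hx₁, hx₂⟩ := Int.ceil_eq_iff.mp (rfl : sector x = _)
  obtain ⟨hy₁, hy₂⟩ := Int.ceil_eq_iff.mp h.symm
  rw [lt_div_iff₀ h3] at hx₁ hy₁
  rw [div_le_iff₀ h3] at hx₂ hy₂
  rw [abs_lt]
  constructor <;> nlinarith

theorem angle_le_pi_div_three_of_sector_eq {x y : ℂ} (hx : x ≠ 0) (hy : y ≠ 0)
    (h : sector x = sector y) : InnerProductGeometry.angle x y ≤ π / 3 := by
  have hclose := abs_arg_sub_arg_lt_of_sector_eq h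
  have harg : (x / y).arg = x.arg - y.arg := by
    rw [← arg_coe_angle_toReal_eq_arg, arg_div_coe_angle hx hy,
      ← Real.Angle.coe_sub, Real.Angle.toReal_coe_eq_self_iff]
    constructor <;> linarith [pi_pos, abs_lt.mp hclose]
  rw [angle_eq_abs_arg hx hy, harg]
  exact hclose.le

end Complex

section Plane

local notation "ℝ²" => EuclideanSpace ℝ (Fin 2)

noncomputable def planeSector (p x : ℝ²) : ℤ :=
  Complex.sector (Complex.orthonormalBasisOneI.repr.symm (x - p))

theorem angle_le_pi_div_three_of_planeSector_eq {p x y : ℝ²} (hx : x ≠ p) (hy : y ≠ p)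
    (h : planeSector p x = planeSector p y) : ∠ x p y ≤ π / 3 := by
  let e := Complex.orthonormalBasisOneI.repr.symm
  have hangle : ∠ x p y = InnerProductGeometry.angle (e (x - p)) (e (y - p)) :=
    (e.toLinearIsometry.angle_map _ _).symm
  rw [hangle]
  exact Complex.angle_le_pi_div_three_of_sector_eq
    ((map_ne_zero_iff e e.injective).mpr (sub_ne_zero.mpr hx))
    ((map_ne_zero_iff e e.injective).mpr (sub_ne_zero.mpr hy)) h

theorem card_le_twelve_of_closerPoints_subsingleton {P T : Finset ℝ²} {p : ℝ²}
    (hTP : T ⊆ P) (hpT : p ∉ T) (hinj : Set.InjOn (dist p) T)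
    (hcloser : ∀ v ∈ T,
      (closerPoints P v p).Subsingleton ∨ (closerPoints P p v).Subsingleton) :
    T.card ≤ 12 := by
  have hfiber : ∀ k ∈ Finset.Icc (-2 : ℤ) 3,
      (T.filter (planeSector p · = k)).card ≤ 2 := by
    intro k _
    have hsub := Finset.filter_subset (planeSector p · = k) T
    refine card_le_two_of_angle_le_pi_div_three (hsub.trans hTP) (fun h => hpT (hsub h))
      (hinj.mono hsub) ?_ fun v hv => hcloser v (hsub hv)
    intro x hx y hy
    exact angle_le_pi_div_three_of_planeSector_eq (ne_of_mem_of_not_mem (hsub hx) hpT)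
      (ne_of_mem_of_not_mem (hsub hy) hpT)
      ((Finset.mem_filter.mp hx).2.trans (Finset.mem_filter.mp hy).2.symm)
  simpa using
    Finset.card_le_mul_card_image_of_maps_to (fun x _ => Complex.sector_mem_Icc _) 2 hfiber

end Plane

theorem S1_union_S2_card_le_12_general (P : Finset (EuclideanSpace ℝ (Fin 2)))
    (hd : DistinctDistances P)
    (p : EuclideanSpace ℝ (Fin 2)) (hp : p ∈ P)
    (q1 q2 : EuclideanSpace ℝ (Fin 2))
    (hq1 : IsNearest P p q1) (hq2 : IsSecondNearest P p q2) :
    (({v | v ∈ P ∧ (IsNearest P v p ∨ IsSecondNearest P v p)} ∪ {q1, q2}) :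
      Set (EuclideanSpace ℝ (Fin 2))).ncard ≤ 12 := by
  set T := P.filter (fun v => IsNearest P v p ∨ IsSecondNearest P v p) ∪ {q1, q2}
  have hT : (({v | v ∈ P ∧ (IsNearest P v p ∨ IsSecondNearest P v p)} ∪ {q1, q2}) :
      Set (EuclideanSpace ℝ (Fin 2))) = T := by
    ext v
    simp [T]
  have hcloser : ∀ v ∈ T, v ∈ P ∧ v ≠ p ∧
      ((closerPoints P v p).Subsingleton ∨ (closerPoints P p v).Subsingleton) := by
    intro v hv
    rcases Finset.mem_union.mp hv with hv | hv
    · obtain ⟨hvP, hnear⟩ := Finset.mem_filter.mp hv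
      have hpv : p ≠ v := hnear.elim (·.2.1) (·.ne)
      exact ⟨hvP, hpv.symm, .inl (closerPoints_subsingleton hnear)⟩
    · rcases Finset.mem_insert.mp hv with rfl | hv
      · exact ⟨hq1.1, hq1.2.1, .inr (closerPoints_subsingleton (.inl hq1))⟩
      · obtain rfl := Finset.mem_singleton.mp hv
        exact ⟨hq2.mem, hq2.ne, .inr (closerPoints_subsingleton (.inr hq2))⟩
  have hTP : (T : Set (EuclideanSpace ℝ (Fin 2))) ⊆ ↑P \ {p} :=
    fun v hv => ⟨(hcloser v hv).1, (hcloser v hv).2.1⟩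
  rw [hT, Set.ncard_coe_finset]
  exact card_le_twelve_of_closerPoints_subsingleton (fun v hv => (hcloser v hv).1)
    (fun hp => (hcloser p hp).2.1 rfl) ((hd.injOn_dist hp).mono hTP) fun v hv => (hcloser v hv).2.2

/-- For a planar point set `P` with pairwise distinct distances, `|P| ≥ 3` and `p ∈ P`,
the set `S_1 ∪ S_2`, where `S_1 = {v ∈ P : n_1(v) = p ∨ n_2(v) = p}` and
`S_2 = {n_1(p), n_2(p)}`, has at most `12` elements. -/
theorem S1_union_S2_card_le_12 (P : Finset (EuclideanSpace ℝ (Fin 2)))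
    (hd : DistinctDistances P) (hP : 3 ≤ P.card)
    (p : EuclideanSpace ℝ (Fin 2)) (hp : p ∈ P)
    (q1 q2 : EuclideanSpace ℝ (Fin 2))
    (hq1 : IsNearest P p q1) (hq2 : IsSecondNearest P p q2) :
    (({v | v ∈ P ∧ (IsNearest P v p ∨ IsSecondNearest P v p)} ∪ {q1, q2}) :
      Set (EuclideanSpace ℝ (Fin 2))).ncard ≤ 12 :=
  S1_union_S2_card_le_12_general P hd p hp q1 q2 hq1 hq2
end

section
/- Let p, x, z be three points in the Euclidean plane ℝ² with x ≠ p and z ≠ p. If dist(p, x) < dist(p, z) and the angle ∠xpz at p is at most 60°, then dist(x, z) < dist(p, z); that is, in the triangle xpz the side pz is strictly the longest side. -/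
open scoped Classical

/-! By the law of cosines and `cos ∠xpz ≥ 1/2`, with `a = |px| < b = |pz|` we get
`|xz|² ≤ a² + b² - ab = b² - a (b - a) < b²`. -/

section
open EuclideanGeometry Real

theorem half_le_cos_of_le_pi_div_three {θ : ℝ} (h₀ : 0 ≤ θ) (h : θ ≤ π / 3) : 1 / 2 ≤ cos θ := by
  rw [← cos_pi_div_three]
  exact cos_le_cos_of_nonneg_of_le_pi h₀ (by linarith [pi_pos]) h

variable {V P : Type*} [NormedAddCommGroup V] [InnerProductSpace ℝ V] [MetricSpace P]
  [NormedAddTorsor V P]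

theorem dist_sq_le_of_angle_le_pi_div_three {p x z : P} (h : ∠ x p z ≤ π / 3) :
    dist x z ^ 2 ≤ dist p x ^ 2 + dist p z ^ 2 - dist p x * dist p z := by
  have hcos := half_le_cos_of_le_pi_div_three (angle_nonneg x p z) h
  have hlaw := law_cos x p z
  rw [dist_comm x p, dist_comm z p] at hlaw
  rw [sq, sq, sq]
  linarith [mul_le_mul_of_nonneg_left hcos (by positivity : 0 ≤ 2 * dist p x * dist p z)]

theorem dist_lt_of_angle_le_pi_div_three {p x z : P} (hx : x ≠ p) (h1 : dist p x < dist p z)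
    (h2 : ∠ x p z ≤ π / 3) : dist x z < dist p z := by
  have ha : 0 < dist p x := dist_pos.2 hx.symm
  have hsq : dist x z ^ 2 < dist p z ^ 2 :=
    calc dist x z ^ 2 ≤ dist p x ^ 2 + dist p z ^ 2 - dist p x * dist p z :=
          dist_sq_le_of_angle_le_pi_div_three h2
      _ = dist p z ^ 2 - dist p x * (dist p z - dist p x) := by ring
      _ < dist p z ^ 2 := sub_lt_self _ (mul_pos ha (sub_pos.2 h1))
  exact lt_of_pow_lt_pow_left₀ 2 dist_nonneg hsq

end

open EuclideanGeometry in
theorem longest_side_of_small_angle_general (p x z : EuclideanSpace ℝ (Fin 2))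
    (hx : x ≠ p)
    (h1 : dist p x < dist p z) (h2 : ∠ x p z ≤ Real.pi / 3) :
    dist x z < dist p z :=
  dist_lt_of_angle_le_pi_div_three hx h1 h2

open EuclideanGeometry in
/-- If `dist p x < dist p z` and the angle `∠ x p z` at `p` is at most `60°`, then
`dist x z < dist p z`; i.e. `pz` is strictly the longest side of the triangle `xpz`. -/
theorem longest_side_of_small_angle (p x z : EuclideanSpace ℝ (Fin 2))
    (hx : x ≠ p) (hz : z ≠ p)
    (h1 : dist p x < dist p z) (h2 : ∠ x p z ≤ Real.pi / 3) :
    dist x z < dist p z :=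
  longest_side_of_small_angle_general p x z hx h1 h2
end

section
/- Let P be a finite set of points in the Euclidean plane ℝ² with all pairwise distances between distinct pairs of points distinct, and let p ∈ P. Then at most 5 points v ∈ P \ {p} have p as their nearest neighbor in P; that is, |{v ∈ P \ {p} : n_1(v) = p}| ≤ 5. -/
open scoped Classical

/-!
If `a` and `b` both have `p` as their nearest neighbour, then `ab` is the strictly longest side of
the triangle `apb`, so the law of cosines makes the angle at `p` exceed `π / 3`. Measuring the
directions from `p` as points of the circle `ℝ / 2πℤ` and cutting it into six arcs of length
`π / 3` starting at one of them, every arc holds at most one direction, and the sixth arc none,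
as it lies within `π / 3` of the starting direction going the other way round.
-/

open Real EuclideanGeometry Module

namespace Real.Angle

theorem card_le_five_of_pi_div_three_lt_abs_toReal_sub (S : Finset Angle)
    (hS : ∀ θ ∈ S, ∀ ψ ∈ S, θ ≠ ψ → π / 3 < |(θ - ψ).toReal|) : S.card ≤ 5 := by
  rcases S.eq_empty_or_nonempty with rfl | hne
  · simp
  obtain ⟨θ₀, hθ₀, hmin⟩ := S.exists_min_image toReal hne
  have hcoe (θ ψ : Angle) : ((θ.toReal - ψ.toReal : ℝ) : Angle) = θ - ψ := by
    rw [coe_sub, coe_toReal, coe_toReal]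
  let arc (θ : Angle) : ℤ := ⌊(θ.toReal - θ₀.toReal) / (π / 3)⌋
  have hmaps : Set.MapsTo arc S (Finset.Ico (0 : ℤ) 5) := by
    intro θ hθ
    have hd : 0 ≤ θ.toReal - θ₀.toReal := sub_nonneg.2 (hmin θ hθ)
    simp only [Finset.coe_Ico, Set.mem_Ico, arc, Int.floor_nonneg, Int.floor_lt]
    refine ⟨div_nonneg hd (by positivity), ?_⟩
    rw [div_lt_iff₀ (by positivity)]
    by_contra! hfar
    push_cast at hfar
    have hne : θ ≠ θ₀ := by rintro rfl; simp at hfar; linarith [pi_pos]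
    have hlt : θ.toReal - θ₀.toReal < 2 * π := by
      linarith [neg_pi_lt_toReal θ₀, toReal_le_pi θ]
    have hwrap : (θ - θ₀).toReal = θ.toReal - θ₀.toReal - 2 * π := by
      rw [← hcoe, toReal_coe_eq_self_sub_two_pi_iff]
      constructor <;> linarith
    have hsep := hS θ hθ θ₀ hθ₀ hne
    rw [hwrap, abs_of_neg (by linarith)] at hsep
    linarith
  have hinj : Set.InjOn arc S := by
    intro θ hθ ψ hψ harc
    by_contra hne
    have hclose : |θ.toReal - ψ.toReal| < π / 3 := by
      have := Int.abs_sub_lt_one_of_floor_eq_floor harc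
      rwa [← sub_div, sub_sub_sub_cancel_right, abs_div,
        abs_of_pos (by positivity : (0 : ℝ) < π / 3), div_lt_one (by positivity)] at this
    obtain ⟨hlo, hhi⟩ := abs_lt.1 hclose
    have hsep := hS θ hθ ψ hψ hne
    rw [← hcoe, toReal_coe_eq_self_iff.2 ⟨by linarith [pi_pos], by linarith [pi_pos]⟩] at hsep
    linarith
  simpa using Finset.card_le_card_of_injOn arc hmaps hinj

end Real.Angle

namespace EuclideanGeometry

variable {V Pt : Type*} [NormedAddCommGroup V] [InnerProductSpace ℝ V] [MetricSpace Pt]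
  [NormedAddTorsor V Pt]

theorem pi_div_three_lt_angle_of_dist_lt_dist {a b p : Pt} (ha : dist a p < dist a b)
    (hb : dist b p < dist a b) : π / 3 < ∠ a p b := by
  by_contra! hle
  have hcos : 1 / 2 ≤ Real.cos (∠ a p b) := by
    rw [← cos_pi_div_three]
    exact cos_le_cos_of_nonneg_of_le_pi (angle_nonneg a p b) (by linarith [pi_pos]) hle
  have hlaw := dist_sq_eq_dist_sq_add_dist_sq_sub_two_mul_dist_mul_dist_mul_cos_angle a p b
  have hap := dist_nonneg (x := a) (y := p)
  have hbp := dist_nonneg (x := b) (y := p)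
  -- with `x, y < c` the sides: the law of cosines gives `c² ≤ x² + y² - xy`,
  -- whereas `c² + xy > (x + y) c ≥ x² + y²`
  nlinarith [mul_pos (sub_pos.2 ha) (sub_pos.2 hb), mul_nonneg hap (sub_pos.2 ha).le,
    mul_nonneg hbp (sub_pos.2 hb).le, mul_nonneg hap hbp]

theorem card_le_five_of_pi_div_three_lt_angle [Fact (finrank ℝ V = 2)] {S : Finset Pt} {p : Pt}
    (hp : p ∉ S) (hS : ∀ a ∈ S, ∀ b ∈ S, a ≠ b → π / 3 < ∠ a p b) : S.card ≤ 5 := by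
  have := FiniteDimensional.of_fact_finrank_eq_two (K := ℝ) (V := V)
  let B := finBasisOfFinrankEq ℝ V (Fact.out : finrank ℝ V = 2)
  let o : Orientation ℝ V (Fin 2) := B.orientation
  let θ (a : Pt) : Angle := o.oangle (B 0) (a -ᵥ p)
  have hne (a : Pt) (ha : a ∈ S) : a -ᵥ p ≠ 0 := vsub_ne_zero.2 (by rintro rfl; exact hp ha)
  have hangle : ∀ a ∈ S, ∀ b ∈ S, ∠ a p b = |(θ b - θ a).toReal| := by
    intro a ha b hb
    rw [o.oangle_sub_left (B.ne_zero 0) (hne a ha) (hne b hb)]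
    exact o.angle_eq_abs_oangle_toReal (hne a ha) (hne b hb)
  have hinj : Set.InjOn θ S := by
    intro a ha b hb hab
    by_contra hne
    have := hS a ha b hb hne
    rw [hangle a ha b hb, hab, sub_self, Angle.toReal_zero, abs_zero] at this
    linarith [pi_pos]
  rw [← Finset.card_image_of_injOn hinj]
  refine Angle.card_le_five_of_pi_div_three_lt_abs_toReal_sub _ ?_
  simp only [Finset.mem_image]
  rintro _ ⟨b, hb, rfl⟩ _ ⟨a, ha, rfl⟩ hab
  rw [← hangle a ha b hb]
  exact hS a ha b hb (by rintro rfl; exact hab rfl)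

end EuclideanGeometry

theorem IsNearest.pi_div_three_lt_angle {V Pt : Type*} [NormedAddCommGroup V]
    [InnerProductSpace ℝ V] [MetricSpace Pt] [NormedAddTorsor V Pt] {P : Finset Pt} {a b p : Pt}
    (ha : IsNearest P a p) (hb : IsNearest P b p) (haP : a ∈ P) (hbP : b ∈ P) (hab : a ≠ b) :
    π / 3 < ∠ a p b := by
  obtain ⟨-, hpa, ha⟩ := ha
  obtain ⟨-, hpb, hb⟩ := hb
  exact pi_div_three_lt_angle_of_dist_lt_dist (ha b hbP hab.symm hpb.symm)
    (dist_comm a b ▸ hb a haP hab hpa.symm)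

theorem nearest_neighbor_at_most_five_general (P : Finset (EuclideanSpace ℝ (Fin 2)))
    (p : EuclideanSpace ℝ (Fin 2)) :
    ({v | v ∈ P ∧ v ≠ p ∧ IsNearest P v p} : Set (EuclideanSpace ℝ (Fin 2))).ncard ≤ 5 := by
  have : Fact (finrank ℝ (EuclideanSpace ℝ (Fin 2)) = 2) := ⟨finrank_euclideanSpace_fin⟩
  have hset : {v | v ∈ P ∧ v ≠ p ∧ IsNearest P v p} =
      ↑(P.filter fun v => v ≠ p ∧ IsNearest P v p) := by
    ext v
    simp
  rw [hset, Set.ncard_coe_finset]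
  refine card_le_five_of_pi_div_three_lt_angle (p := p) (by simp) fun a ha b hb hab => ?_
  simp only [Finset.mem_filter] at ha hb
  exact ha.2.2.pi_div_three_lt_angle hb.2.2 ha.1 hb.1 hab

/-- In a planar point set `P` with pairwise distinct distances, at most `5` points of
`P \ {p}` have `p` as their nearest neighbor. -/
theorem nearest_neighbor_at_most_five (P : Finset (EuclideanSpace ℝ (Fin 2)))
    (hd : DistinctDistances P) (p : EuclideanSpace ℝ (Fin 2)) (hp : p ∈ P) :
    ({v | v ∈ P ∧ v ≠ p ∧ IsNearest P v p} : Set (EuclideanSpace ℝ (Fin 2))).ncard ≤ 5 :=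
  nearest_neighbor_at_most_five_general P p
end
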